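/- arXiv:2504.04267 — 2 statements merged into one kernel-verified Lean document; each statement's English description precedes it below -/
import Mathlib

section
/- Let P = (p₁,…,p_n) be a probability distribution. Then the Knuth–Yao expected entropy cost Σᵢ ν(pᵢ) satisfies H(P) ≤ Σᵢ ν(pᵢ) < H(P) + 2, where H(P) = Σᵢ pᵢ log₂(1/pᵢ) and ν(x) = Σ_{d≥1} d·ε_d(x)·2^{-d}. -/
noncomputable def epsBit (d : ℕ) (x : ℝ) : ℝ := ((⌊2 ^ d * x⌋ % 2 : ℤ) : ℝ)

noncomputable def nu (x : ℝ) : ℝ := ∑' d : ℕ, (d : ℝ) * epsBit d x / 2 ^ d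

/-!
Halving `x` shifts its binary digits one place to the right, so `nu (x / 2) = (nu x + x) / 2`,
while `(x / 2) log₂ (2 / x) = (x log₂ (1 / x) + x) / 2`. Hence both `nu x - x log₂ (1 / x)` and
`2x` are halved together, and the per-term bounds `x log₂ (1 / x) ≤ nu x < x log₂ (1 / x) + 2x`
reduce to `x ∈ [1/2, 1)`. There `0 < log₂ (1 / x) ≤ 1`, and `x ≤ nu x ≤ 2x` follows by comparing
`∑ d ε_d 2^(-d)` with `∑ ε_d 2^(-d) = x` termwise, using `ε_0 = 0` and `ε_1 = 1`.
-/

open Real Set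

lemma epsBit_eq_zero_or_eq_one (d : ℕ) (x : ℝ) : epsBit d x = 0 ∨ epsBit d x = 1 := by
  rcases Int.emod_two_eq ⌊2 ^ d * x⌋ with h | h <;> simp [epsBit, h]

lemma epsBit_nonneg (d : ℕ) (x : ℝ) : 0 ≤ epsBit d x := by
  rcases epsBit_eq_zero_or_eq_one d x with h | h <;> simp [h]

lemma epsBit_le_one (d : ℕ) (x : ℝ) : epsBit d x ≤ 1 := by
  rcases epsBit_eq_zero_or_eq_one d x with h | h <;> simp [h]

lemma epsBit_zero {x : ℝ} (hx : x ∈ Ico 0 1) : epsBit 0 x = 0 := by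
  simp [epsBit, Int.floor_eq_zero_iff.mpr hx]

lemma epsBit_one {x : ℝ} (hx : x ∈ Ico (1 / 2) 1) : epsBit 1 x = 1 := by
  have : ⌊2 * x⌋ = 1 :=
    Int.floor_eq_iff.mpr ⟨by push_cast; linarith [hx.1], by push_cast; linarith [hx.2]⟩
  simp [epsBit, this]

lemma epsBit_succ_div_two (d : ℕ) (x : ℝ) : epsBit (d + 1) (x / 2) = epsBit d x := by
  simp only [epsBit, pow_succ, mul_assoc, mul_div_cancel₀ x two_ne_zero]

lemma epsBit_succ_eq_digits {x : ℝ} (hx : 0 ≤ x) (d : ℕ) :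
    epsBit (d + 1) x = digits x 2 d := by
  rw [epsBit, ← Int.natCast_floor_eq_floor (by positivity), digits, Fin.val_ofNat, mul_comm x]
  push_cast
  rfl

lemma hasSum_epsBit {x : ℝ} (hx : x ∈ Ico 0 1) : HasSum (fun d ↦ epsBit d x / 2 ^ d) x := by
  have hterm (d : ℕ) : epsBit (d + 1) x / 2 ^ (d + 1) = ofDigitsTerm (digits x 2) d := by
    rw [ofDigitsTerm, epsBit_succ_eq_digits hx.1, div_eq_mul_inv, Nat.cast_ofNat]
  have h : HasSum (fun d ↦ epsBit (d + 1) x / 2 ^ (d + 1)) x :=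
    (hasSum_ofDigitsTerm_digits x (b := 2) (by norm_num) hx).congr_fun hterm
  simpa [epsBit_zero hx] using HasSum.zero_add (f := fun d ↦ epsBit d x / 2 ^ d) h

lemma hasSum_nu (x : ℝ) : HasSum (fun d : ℕ ↦ d * epsBit d x / 2 ^ d) (nu x) := by
  refine Summable.hasSum (.of_nonneg_of_le (fun d ↦ by have := epsBit_nonneg d x; positivity)
    (fun d ↦ ?_)
    (hasSum_coe_mul_geometric_of_norm_lt_one (r := (1 / 2 : ℝ)) (by norm_num)).summable)
  rw [one_div_pow, mul_one_div]
  gcongr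
  exact mul_le_of_le_one_right (by positivity) (epsBit_le_one d x)

lemma nu_zero : nu 0 = 0 := by
  simp [nu, epsBit]

lemma nu_one : nu 1 = 0 := by
  have h (d : ℕ) : (d : ℝ) * epsBit d 1 / 2 ^ d = 0 := by
    rcases d with _ | d
    · simp
    · have : ⌊(2 : ℝ) ^ (d + 1) * 1⌋ % 2 = 0 := by
        rw [mul_one, show (2 : ℝ) ^ (d + 1) = ((2 ^ (d + 1) : ℤ) : ℝ) by push_cast; rfl,
          Int.floor_intCast]
        exact Int.emod_eq_zero_of_dvd (dvd_pow_self 2 d.succ_ne_zero)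
      rw [epsBit, this]; simp
  simp [nu, h]

lemma nu_div_two {x : ℝ} (hx : x ∈ Ico 0 1) : nu (x / 2) = (nu x + x) / 2 := by
  have h : HasSum (fun d : ℕ ↦ ((d + 1 : ℕ) : ℝ) * epsBit (d + 1) (x / 2) / 2 ^ (d + 1))
      ((nu x + x) / 2) := by
    refine (((hasSum_nu x).add (hasSum_epsBit hx)).div_const 2).congr_fun fun d ↦ ?_
    rw [epsBit_succ_div_two, pow_succ]
    push_cast
    ring
  simpa [nu] using (HasSum.zero_add (f := fun d : ℕ ↦ d * epsBit d (x / 2) / 2 ^ d) h).tsum_eq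

lemma self_le_nu {x : ℝ} (hx : x ∈ Ico 0 1) : x ≤ nu x := by
  refine hasSum_le (fun d ↦ ?_) (hasSum_epsBit hx) (hasSum_nu x)
  rcases Nat.eq_zero_or_pos d with rfl | hd
  · simp [epsBit_zero hx]
  · have := epsBit_nonneg d x
    gcongr
    exact le_mul_of_one_le_left this (by exact_mod_cast hd)

lemma nu_le_two_mul {x : ℝ} (hx : x ∈ Ico (1 / 2) 1) : nu x ≤ 2 * x := by
  have hx' : x ∈ Ico 0 1 := ⟨by linarith [hx.1], hx.2⟩
  -- a termwise majorant of `(d - 2) ε_d 2^(-d)`, exact at `d = 0, 1` where `ε_0 = 0`, `ε_1 = 1`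
  have hbound :
      HasSum (fun d : ℕ ↦ ((d : ℝ) - 2) * (1 / 2) ^ d + if d = 0 then 2 else 0) 0 := by
    have := ((hasSum_coe_mul_geometric_of_norm_lt_one (r := (1 / 2 : ℝ)) (by norm_num)).sub
      (hasSum_geometric_two.mul_left 2)).add (hasSum_ite_eq 0 (2 : ℝ))
    norm_num at this
    exact this.congr_fun fun d ↦ by ring
  have hdiff : HasSum (fun d : ℕ ↦ ((d : ℝ) - 2) * epsBit d x / 2 ^ d) (nu x - 2 * x) :=
    ((hasSum_nu x).sub ((hasSum_epsBit hx').mul_left 2)).congr_fun fun d ↦ by ring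
  suffices nu x - 2 * x ≤ 0 by linarith
  refine hasSum_le (fun d ↦ ?_) hdiff hbound
  match d with
  | 0 => simp [epsBit_zero hx']
  | 1 => norm_num [epsBit_one hx]
  | d + 2 =>
    rw [if_neg (Nat.succ_ne_zero _), add_zero, one_div_pow, mul_one_div]
    gcongr
    exact mul_le_of_le_one_right (by push_cast; linarith) (epsBit_le_one _ _)

lemma mul_logb_inv_div_two (x : ℝ) :
    x / 2 * logb 2 (1 / (x / 2)) = (x * logb 2 (1 / x) + x) / 2 := by
  rcases eq_or_ne x 0 with rfl | hx
  · simp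
  · rw [one_div_div, div_eq_mul_one_div 2 x, logb_mul two_ne_zero (by simpa),
      logb_self_eq_one one_lt_two]
    ring

lemma nu_mem_Ico_of_half_le {x : ℝ} (hx : x ∈ Ico (1 / 2) 1) :
    nu x ∈ Ico (x * logb 2 (1 / x)) (x * logb 2 (1 / x) + 2 * x) := by
  have hx0 : 0 < x := by linarith [hx.1]
  have hlog_pos : 0 < logb 2 (1 / x) :=
    logb_pos one_lt_two (by rw [lt_one_div one_pos hx0]; simpa using hx.2)
  have hlog_le : logb 2 (1 / x) ≤ 1 :=
    (logb_le_logb_of_le one_lt_two (by positivity) (by rw [div_le_iff₀ hx0]; linarith [hx.1]))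
      |>.trans_eq (logb_self_eq_one one_lt_two)
  constructor
  · calc x * logb 2 (1 / x) ≤ x := mul_le_of_le_one_right hx0.le hlog_le
      _ ≤ nu x := self_le_nu ⟨hx0.le, hx.2⟩
  · linarith [nu_le_two_mul hx, mul_pos hx0 hlog_pos]

lemma nu_mem_Ico_of_lt_one {x : ℝ} (hx0 : 0 < x) (hx1 : x < 1) :
    nu x ∈ Ico (x * logb 2 (1 / x)) (x * logb 2 (1 / x) + 2 * x) := by
  obtain ⟨k, hk⟩ := exists_pow_lt_of_lt_one hx0 (by norm_num : (1 / 2 : ℝ) < 1)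
  induction k generalizing x with
  | zero => linarith [pow_zero (1 / 2 : ℝ)]
  | succ k ih =>
    rcases le_or_gt (1 / 2) x with hx | hx
    · exact nu_mem_Ico_of_half_le ⟨hx, hx1⟩
    · obtain ⟨lower, upper⟩ := ih (by positivity : 0 < 2 * x) (by linarith)
        (by rw [pow_succ] at hk; linarith)
      have hnu := nu_div_two (x := 2 * x) ⟨by positivity, by linarith⟩
      have hent := mul_logb_inv_div_two (2 * x)
      rw [mul_div_cancel_left₀ x two_ne_zero] at hnu hent
      constructor <;> linarith

lemma nu_mem_Ico {x : ℝ} (hx : x ∈ Ioc 0 1) :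
    nu x ∈ Ico (x * logb 2 (1 / x)) (x * logb 2 (1 / x) + 2 * x) := by
  rcases hx.2.eq_or_lt with rfl | hx1
  · simp [nu_one]
  · exact nu_mem_Ico_of_lt_one hx.1 hx1

lemma nu_mem_Icc {x : ℝ} (hx : x ∈ Icc 0 1) :
    nu x ∈ Icc (x * logb 2 (1 / x)) (x * logb 2 (1 / x) + 2 * x) := by
  rcases hx.1.eq_or_lt with rfl | hx0
  · simp [nu_zero]
  · exact Ico_subset_Icc_self (nu_mem_Ico ⟨hx0, hx.2⟩)

theorem knuth_yao_entropy_cost (n : ℕ) (p : Fin n → ℝ)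
    (hnonneg : ∀ i, 0 ≤ p i) (hsum : ∑ i, p i = 1) :
    (∑ i, p i * Real.logb 2 (1 / p i)) ≤ ∑ i, nu (p i) ∧
    ∑ i, nu (p i) < (∑ i, p i * Real.logb 2 (1 / p i)) + 2 := by
  have hp (i : Fin n) : p i ∈ Icc 0 1 :=
    ⟨hnonneg i, hsum ▸ Finset.single_le_sum (fun j _ ↦ hnonneg j) (Finset.mem_univ i)⟩
  obtain ⟨i₀, -, hi₀⟩ : ∃ i ∈ Finset.univ, (0 : ℝ) < p i :=
    Finset.exists_lt_of_sum_lt (by simp [hsum])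
  constructor
  · exact Finset.sum_le_sum fun i _ ↦ (nu_mem_Icc (hp i)).1
  · calc ∑ i, nu (p i) < ∑ i, (p i * logb 2 (1 / p i) + 2 * p i) :=
          Finset.sum_lt_sum (fun i _ ↦ (nu_mem_Icc (hp i)).2)
            ⟨i₀, Finset.mem_univ _, (nu_mem_Ico ⟨hi₀, (hp i₀).2⟩).2⟩
      _ = ∑ i, p i * logb 2 (1 / p i) + 2 := by
          rw [Finset.sum_add_distrib, ← Finset.mul_sum, hsum, mul_one]
end

section
/- Let a₁,…,a_n be coprime positive integers with sum m, k = ⌈log₂ m⌉, and for K ≥ k let c = ⌊2^K/m⌋, a₀ = 2^k − m, A_i = c·a_i for 1 ≤ i ≤ n, and A₀ = 2^K − c·m. Then (2^K/(cm))·(ν(A₀/2^K) + Σ_{i=1}^n ν(A_i/2^K)) ≤ (2^k/m)·(ν(a₀/2^k) + Σ_{i=1}^n ν(a_i/2^k)); that is, the expected entropy cost of the amplified rejection sampler is at most that of the unamplified one. -/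
open Finset

lemma Nat.two_mul_div_mod_of_lt {x m : ℕ} (h : 2 * (x % m) < m) :
    2 * x / m = 2 * (x / m) ∧ 2 * x % m = 2 * (x % m) := by
  refine (Nat.div_mod_unique (by omega)).mpr ⟨?_, h⟩
  have := Nat.div_add_mod x m
  linarith

lemma Nat.two_mul_div_mod_of_le {x m : ℕ} (hm : 0 < m) (h : m ≤ 2 * (x % m)) :
    2 * x / m = 2 * (x / m) + 1 ∧ 2 * x % m = 2 * (x % m) - m := by
  refine (Nat.div_mod_unique hm).mpr ⟨?_, by have := Nat.mod_lt x hm; omega⟩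
  have := Nat.div_add_mod x m
  zify [h] at this ⊢
  linarith

lemma Nat.two_pow_clog_lt_two_mul {m : ℕ} (hm : 0 < m) : 2 ^ Nat.clog 2 m < 2 * m := by
  rcases Nat.lt_or_ge 1 m with h | h
  · have := Nat.pow_pred_clog_lt_self one_lt_two h
    rw [← Nat.succ_pred_eq_of_pos (Nat.clog_pos one_lt_two h), pow_succ]
    omega
  · rw [Nat.clog_of_right_le_one h]
    omega

def sumModTwoPow (L j : ℕ) : ℕ := ∑ s ∈ range L, j % 2 ^ (s + 1)

lemma sumModTwoPow_add_le (L x y : ℕ) :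
    sumModTwoPow L (x + y) ≤ sumModTwoPow L x + sumModTwoPow L y := by
  rw [sumModTwoPow, sumModTwoPow, sumModTwoPow, ← sum_add_distrib]
  exact sum_le_sum fun s _ => (Nat.add_mod _ _ _).le.trans (Nat.mod_le _ _)

lemma sumModTwoPow_succ_two_mul (L x : ℕ) :
    sumModTwoPow (L + 1) (2 * x) = 2 * sumModTwoPow L x := by
  rw [sumModTwoPow, sum_range_succ', sumModTwoPow, mul_sum]
  simp only [pow_succ' 2 (_ + 1), Nat.mul_mod_mul_left, zero_add, pow_one, Nat.mul_mod_right,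
    add_zero]

lemma sumModTwoPow_add_two_pow_self (L x : ℕ) :
    sumModTwoPow L (x + 2 ^ L) = sumModTwoPow L x := by
  refine sum_congr rfl fun s hs => ?_
  have hdvd : 2 ^ (s + 1) ∣ 2 ^ L := pow_dvd_pow 2 (mem_range.mp hs)
  rw [Nat.add_mod, Nat.mod_eq_zero_of_dvd hdvd, add_zero, Nat.mod_mod]

lemma sumModTwoPow_of_le {L L' x : ℕ} (hL : L ≤ L') (hx : x < 2 ^ (L + 1)) :
    sumModTwoPow L' x = sumModTwoPow L x + (L' - L) * x := by
  obtain ⟨d, rfl⟩ := Nat.exists_eq_add_of_le hL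
  rw [sumModTwoPow, sum_range_add, Nat.add_sub_cancel_left]
  congr 1
  rw [sum_congr rfl fun s _ => Nat.mod_eq_of_lt (hx.trans_le (Nat.pow_le_pow_right two_pos
    (by omega))), sum_const, card_range, smul_eq_mul]

lemma sumModTwoPow_succ_two_mul_add_le {k L x y : ℕ} (hkL : k ≤ L + 1) (hy : y < 2 ^ (k + 1)) :
    sumModTwoPow (L + 1) (2 * x + y) ≤
      2 * sumModTwoPow L x + sumModTwoPow k y + (L + 1 - k) * y := by
  calc sumModTwoPow (L + 1) (2 * x + y)
      ≤ sumModTwoPow (L + 1) (2 * x) + sumModTwoPow (L + 1) y := sumModTwoPow_add_le _ _ _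
    _ = _ := by rw [sumModTwoPow_succ_two_mul, sumModTwoPow_of_le hkL hy, add_assoc]

lemma sumModTwoPow_succ_two_mul_sub_le {k L m r : ℕ} (hkL : k ≤ L + 1) (hmk : m ≤ 2 ^ k)
    (hrm : r < m) (hmr : m ≤ 2 * r) :
    sumModTwoPow (L + 1) (2 * r - m) + (L + 1 - k) * m ≤
      2 * sumModTwoPow L r + sumModTwoPow k (2 ^ k - m) := by
  set u := 2 * r - m
  -- `u + 2^k = 2r + (2^k - m)`, and adding `2^k` to `u < 2^k` adds `2^k` to every residue
  -- beyond level `k`.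
  have hu : u < 2 ^ k := by omega
  have hlift : sumModTwoPow (L + 1) (u + 2 ^ k) =
      sumModTwoPow (L + 1) u + (L + 1 - k) * 2 ^ k := by
    rw [sumModTwoPow_of_le hkL (by omega), sumModTwoPow_of_le hkL (by omega),
      sumModTwoPow_add_two_pow_self]
    ring
  have hsplit : u + 2 ^ k = 2 * r + (2 ^ k - m) := by omega
  have hbound := sumModTwoPow_succ_two_mul_add_le (x := r) hkL (y := 2 ^ k - m) (by omega)
  have hpow : (L + 1 - k) * 2 ^ k = (L + 1 - k) * m + (L + 1 - k) * (2 ^ k - m) := by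
    rw [← mul_add, Nat.add_sub_cancel' hmk]
  rw [← hsplit, hlift] at hbound
  omega

lemma sum_range_digit_mul_two_pow (j L : ℕ) :
    ∑ t ∈ range L, j / 2 ^ t % 2 * 2 ^ t = j % 2 ^ L := by
  induction L with
  | zero => simp [Nat.mod_one]
  | succ L ih => rw [sum_range_succ, ih, Nat.mod_pow_succ, mul_comm]

lemma sum_range_weighted_digit_eq_sumModTwoPow (j L : ℕ) :
    ∑ t ∈ range (L + 1), (L - t) * (j / 2 ^ t % 2) * 2 ^ t = sumModTwoPow L j := by
  induction L with
  | zero => simp [sumModTwoPow]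
  | succ L ih =>
    have hsplit : ∀ t ∈ range (L + 1), (L + 1 - t) * (j / 2 ^ t % 2) * 2 ^ t
        = (L - t) * (j / 2 ^ t % 2) * 2 ^ t + j / 2 ^ t % 2 * 2 ^ t := fun t ht => by
      rw [Nat.sub_add_comm (Nat.le_of_lt_succ (mem_range.mp ht))]; ring
    rw [sum_range_succ, Nat.sub_self, zero_mul, zero_mul, add_zero, sum_congr rfl hsplit,
      sum_add_distrib, ih, sum_range_digit_mul_two_pow, sumModTwoPow, sumModTwoPow,
      sum_range_succ]

lemma epsBit_natCast_div_two_pow_of_le {d L : ℕ} (j : ℕ) (hd : d ≤ L) :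
    epsBit d ((j : ℝ) / 2 ^ L) = ((j / 2 ^ (L - d) % 2 : ℕ) : ℝ) := by
  have hscale : (2 : ℝ) ^ d * ((j : ℝ) / 2 ^ L) = (j : ℝ) / ((2 ^ (L - d) : ℕ) : ℝ) := by
    rw [← Nat.sub_add_cancel hd, pow_add, Nat.add_sub_cancel]
    push_cast
    field_simp
  rw [epsBit, hscale, Int.floor_div_natCast, Int.floor_natCast]
  norm_cast

lemma epsBit_natCast_div_two_pow_of_lt {d L : ℕ} (j : ℕ) (hd : L < d) :
    epsBit d ((j : ℝ) / 2 ^ L) = 0 := by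
  obtain ⟨e, rfl⟩ := Nat.exists_eq_add_of_lt hd
  have hscale :
      (2 : ℝ) ^ (L + e + 1) * ((j : ℝ) / 2 ^ L) = ((2 * (2 ^ e * j) : ℕ) : ℝ) := by
    push_cast
    field_simp
    ring
  rw [epsBit, hscale, Int.floor_natCast]
  push_cast
  simp

theorem nu_natCast_div_two_pow (j L : ℕ) :
    nu ((j : ℝ) / 2 ^ L) = sumModTwoPow L j / 2 ^ L := by
  have hsupp : ∀ d ∉ range (L + 1), (d : ℝ) * epsBit d ((j : ℝ) / 2 ^ L) / 2 ^ d = 0 :=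
    fun d hd => by
      rw [epsBit_natCast_div_two_pow_of_lt j (by simpa using hd), mul_zero, zero_div]
  rw [nu, tsum_eq_sum hsupp, ← sum_range_weighted_digit_eq_sumModTwoPow, ← sum_range_reflect,
    Nat.cast_sum, sum_div]
  refine sum_congr rfl fun t ht => ?_
  have ht : t ≤ L := Nat.le_of_lt_succ (mem_range.mp ht)
  rw [Nat.add_sub_cancel, epsBit_natCast_div_two_pow_of_le j (Nat.sub_le L t),
    Nat.sub_sub_self ht]
  rw [← Nat.sub_add_cancel ht, pow_add, Nat.add_sub_cancel]
  push_cast [Nat.cast_sub ht]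
  field_simp

section Cost

variable {n : ℕ} (a : Fin n → ℕ)

def costNumerator (L c r : ℕ) : ℕ := sumModTwoPow L r + ∑ i, sumModTwoPow L (c * a i)

lemma costNumerator_succ_two_mul (L c r : ℕ) :
    costNumerator a (L + 1) (2 * c) (2 * r) = 2 * costNumerator a L c r := by
  simp only [costNumerator, mul_assoc, sumModTwoPow_succ_two_mul, mul_add, mul_sum]

variable {a}

lemma costNumerator_succ_le {m k K c r : ℕ} (hm : m = ∑ i, a i) (hmk : m ≤ 2 ^ k)
    (hkK : k ≤ K) (hrm : r < m) (hmr : m ≤ 2 * r) :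
    costNumerator a (K + 1) (2 * c + 1) (2 * r - m) ≤
      2 * costNumerator a K c r + costNumerator a k 1 (2 ^ k - m) := by
  have hai : ∀ i, a i < 2 ^ (k + 1) := fun i => by
    have := hm ▸ single_le_sum (fun j _ => Nat.zero_le (a j)) (mem_univ i)
    rw [pow_succ]; omega
  have hsum : ∑ i, sumModTwoPow (K + 1) ((2 * c + 1) * a i) ≤
      ∑ i, (2 * sumModTwoPow K (c * a i) + sumModTwoPow k (1 * a i) + (K + 1 - k) * a i) :=
    sum_le_sum fun i _ => by
      simp only [add_mul, one_mul, mul_assoc]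
      exact sumModTwoPow_succ_two_mul_add_le (by omega) (hai i)
  have hrem := sumModTwoPow_succ_two_mul_sub_le (L := K) (by omega) hmk hrm hmr
  simp only [costNumerator, sum_add_distrib, ← mul_sum, ← hm] at hsum ⊢
  omega

lemma costNumerator_le_mul {m k : ℕ} (hm : m = ∑ i, a i) (hmk : m ≤ 2 ^ k)
    (hkm : 2 ^ k < 2 * m) {K : ℕ} (hkK : k ≤ K) :
    costNumerator a K (2 ^ K / m) (2 ^ K % m) ≤
      2 ^ K / m * costNumerator a k 1 (2 ^ k - m) := by
  induction K, hkK using Nat.le_induction with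
  | base =>
    obtain ⟨hdiv, hmod⟩ := (Nat.div_mod_unique (by omega)).mpr
      (⟨by omega, by omega⟩ : 2 ^ k - m + m * 1 = 2 ^ k ∧ 2 ^ k - m < m)
    rw [hdiv, hmod, one_mul]
  | succ K hkK ih =>
    rw [pow_succ']
    rcases Nat.lt_or_ge (2 * (2 ^ K % m)) m with h | h
    · obtain ⟨hdiv, hmod⟩ := Nat.two_mul_div_mod_of_lt h
      rw [hdiv, hmod, costNumerator_succ_two_mul, mul_assoc]
      exact Nat.mul_le_mul_left 2 ih
    · obtain ⟨hdiv, hmod⟩ := Nat.two_mul_div_mod_of_le (by omega) h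
      rw [hdiv, hmod]
      calc costNumerator a (K + 1) (2 * (2 ^ K / m) + 1) (2 * (2 ^ K % m) - m)
          ≤ 2 * costNumerator a K (2 ^ K / m) (2 ^ K % m) + costNumerator a k 1 (2 ^ k - m) :=
            costNumerator_succ_le hm hmk hkK (Nat.mod_lt _ (by omega)) h
        _ ≤ 2 * (2 ^ K / m * costNumerator a k 1 (2 ^ k - m)) +
              costNumerator a k 1 (2 ^ k - m) := by gcongr
        _ = _ := by ring

end Cost

lemma nu_add_sum_nu_eq {n : ℕ} (a : Fin n → ℕ) (L c r : ℕ) :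
    nu ((r : ℝ) / 2 ^ L) + ∑ i, nu (((c * a i : ℕ) : ℝ) / 2 ^ L) =
      costNumerator a L c r / 2 ^ L := by
  simp only [nu_natCast_div_two_pow, costNumerator, ← sum_div, Nat.cast_add, Nat.cast_sum,
    add_div]

theorem aldr_cost_le_fldr_cost_general (n : ℕ) (a : Fin n → ℕ)
    (m : ℕ) (hm : m = ∑ i, a i)
    (k : ℕ) (hk : k = Nat.clog 2 m)
    (K : ℕ) (hK : k ≤ K)
    (c : ℕ) (hc : c = 2 ^ K / m) :
    ((2 : ℝ) ^ K / ((c : ℝ) * m)) *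
        (nu (((2 ^ K - c * m : ℕ) : ℝ) / 2 ^ K) +
          ∑ i, nu (((c * a i : ℕ) : ℝ) / 2 ^ K))
      ≤ ((2 : ℝ) ^ k / m) *
        (nu (((2 ^ k - m : ℕ) : ℝ) / 2 ^ k) +
          ∑ i, nu ((a i : ℝ) / 2 ^ k)) := by
  rcases Nat.eq_zero_or_pos m with rfl | hm0
  · simp
  have hmk : m ≤ 2 ^ k := hk ▸ Nat.le_pow_clog one_lt_two m
  have hkm : 2 ^ k < 2 * m := hk ▸ Nat.two_pow_clog_lt_two_mul hm0
  have hc0 : 0 < c := hc ▸ Nat.div_pos (hmk.trans (Nat.pow_le_pow_right two_pos hK)) hm0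
  have hrem : 2 ^ K - c * m = 2 ^ K % m := by rw [hc, Nat.mod_eq_sub, mul_comm]
  have hdiscrete := costNumerator_le_mul hm hmk hkm hK
  rw [← hc, ← hrem] at hdiscrete
  have hfldr := nu_add_sum_nu_eq a k 1 (2 ^ k - m)
  simp only [one_mul] at hfldr
  rw [nu_add_sum_nu_eq, hfldr]
  have hmR : (0 : ℝ) < m := by exact_mod_cast hm0
  have hcR : (0 : ℝ) < c := by exact_mod_cast hc0
  calc (2 : ℝ) ^ K / (c * m) * (costNumerator a K c (2 ^ K - c * m) / 2 ^ K)
      = costNumerator a K c (2 ^ K - c * m) / (c * m) := by field_simp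
    _ ≤ (c * costNumerator a k 1 (2 ^ k - m) : ℕ) / (c * m) := by gcongr
    _ = 2 ^ k / m * (costNumerator a k 1 (2 ^ k - m) / 2 ^ k) := by
      push_cast
      field_simp

theorem aldr_cost_le_fldr_cost (n : ℕ) (a : Fin n → ℕ)
    (hpos : ∀ i, 0 < a i) (hcop : Finset.univ.gcd a = 1)
    (m : ℕ) (hm : m = ∑ i, a i)
    (k : ℕ) (hk : k = Nat.clog 2 m)
    (K : ℕ) (hK : k ≤ K)
    (c : ℕ) (hc : c = 2 ^ K / m) :
    ((2 : ℝ) ^ K / ((c : ℝ) * m)) *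
        (nu (((2 ^ K - c * m : ℕ) : ℝ) / 2 ^ K) +
          ∑ i, nu (((c * a i : ℕ) : ℝ) / 2 ^ K))
      ≤ ((2 : ℝ) ^ k / m) *
        (nu (((2 ^ k - m : ℕ) : ℝ) / 2 ^ k) +
          ∑ i, nu ((a i : ℝ) / 2 ^ k)) :=
  aldr_cost_le_fldr_cost_general n a m hm k hk K hK c hc
end
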